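/- Assume π(x) < x/(log x - 1 - 1/log x - 3.83/log^2 x) for all x ≥ 9.25, and assume Firoozbakht's conjecture holds unconditionally for all p_k < 4×10^18. If for all k with p_k > 4×10^18 we have p_{k+1} - p_k < log^2 p_k - log p_k - 1 - 3.83/log p_k, then Firoozbakht's conjecture p_{k+1} < p_k^{1+1/k} holds for all k ≥ 1. -/
import Mathlib

open Real

/-- `p k` is the `k`-th prime, 1-indexed: `p 1 = 2`, `p 2 = 3`, ... -/
noncomputable def p (k : ℕ) : ℕ := Nat.nth Nat.Prime (k - 1)

lemma primeCounting_p (k : ℕ) (hk : 1 ≤ k) : Nat.primeCounting (p k) = k := by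
  have : Nat.primeCounting (p k) = Nat.count Nat.Prime (Nat.nth Nat.Prime (k-1) + 1) := rfl
  rw [this, Nat.count_nth_succ_of_infinite Nat.infinite_setOf_prime]
  omega

theorem stmt_17
    (axler : ∀ x : ℝ, 9.25 ≤ x →
      (Nat.primeCounting ⌊x⌋₊ : ℝ) <
        x / (Real.log x - 1 - 1 / Real.log x - 3.83 / (Real.log x) ^ 2))
    (hsmall : ∀ k : ℕ, 1 ≤ k → (p k : ℕ) < 4 * 10 ^ 18 →
      (p (k+1) : ℝ) < (p k : ℝ) ^ (1 + 1 / (k : ℝ)))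
    (hgap : ∀ k : ℕ, 4 * 10 ^ 18 < p k →
      (p (k+1) : ℝ) - (p k : ℝ) <
        (Real.log (p k)) ^ 2 - Real.log (p k) - 1 - 3.83 / Real.log (p k)) :
    ∀ k : ℕ, 1 ≤ k → (p (k+1) : ℝ) < (p k : ℝ) ^ (1 + 1 / (k : ℝ)) := by
  intro k hk
  have hprime : Nat.Prime (p k) := Nat.prime_nth_prime _
  rcases lt_trichotomy (p k) (4 * 10 ^ 18) with hlt | heq | hgt
  · exact hsmall k hk hlt
  · exfalso
    have h2 : 2 ∣ p k := by omega
    rcases (hprime.eq_one_or_self_of_dvd 2 h2) with h|h <;> omega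
  · -- main case
    have hpk2 : 2 ≤ p k := hprime.two_le
    have hsucc : p k < p (k + 1) := by
      have : k - 1 < (k + 1) - 1 := by omega
      exact (Nat.nth_lt_nth Nat.infinite_setOf_prime).mpr this
    have hpkpos : (0:ℝ) < (p k : ℝ) := by positivity
    have hpk1pos : (0:ℝ) < (p (k+1) : ℝ) := by
      have h : 0 < p (k+1) := by omega
      exact_mod_cast h
    set L := Real.log (p k) with hL
    -- L > 3
    have hL3 : (3:ℝ) < L := by
      rw [hL, Real.lt_log_iff_exp_lt hpkpos]
      have h1 : Real.exp 3 = (Real.exp 1)^3 := by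
        rw [← Real.exp_nat_mul]; norm_num
      have h2 : Real.exp 1 < 2.7182818286 := Real.exp_one_lt_d9
      have h3 : Real.exp 3 < 2.7182818286 ^ 3 := by
        rw [h1]
        exact pow_lt_pow_left₀ h2 (Real.exp_pos 1).le three_ne_zero
      have h4 : ((4 * 10 ^ 18 : ℕ) : ℝ) < (p k : ℝ) := by exact_mod_cast hgt
      have h5 : (2.7182818286:ℝ) ^ 3 < 4 * 10 ^ 18 := by norm_num
      push_cast at h4
      linarith
    set D := L - 1 - 1/L - 3.83/L^2 with hD
    have hLpos : (0:ℝ) < L := by linarith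
    have hDpos : (0:ℝ) < D := by
      rw [hD]
      have h1 : 1/L < 1/3 := by
        rw [div_lt_div_iff₀ hLpos (by norm_num)]; linarith
      have h2 : 3.83/L^2 < 3.83/9 := by
        apply div_lt_div_of_pos_left (by norm_num) (by norm_num)
        nlinarith
      linarith
    -- pi bound : k < p_k / D
    have hx925 : (9.25:ℝ) ≤ (p k : ℝ) := by
      have h4 : ((4 * 10 ^ 18 : ℕ) : ℝ) < (p k : ℝ) := by exact_mod_cast hgt
      push_cast at h4
      linarith
    have hax := axler (p k : ℝ) hx925
    rw [Nat.floor_natCast, primeCounting_p k hk] at hax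
    have hkD : (k:ℝ) < (p k : ℝ) / D := hax
    -- gap bound
    have hg := hgap k hgt
    have hgap' : (p (k+1) : ℝ) - (p k : ℝ) < D * L := by
      have hg' : (p (k+1) : ℝ) - (p k : ℝ) < L^2 - L - 1 - 3.83/L := hg
      have hDL : D * L = L^2 - L - 1 - 3.83/L := by
        rw [hD]; field_simp
      rw [hDL]; exact hg'
    -- log ratio
    have hratio : (0:ℝ) < Real.log ((p (k+1) : ℝ) / (p k : ℝ)) := by
      apply Real.log_pos
      rw [lt_div_iff₀ hpkpos, one_mul]
      exact_mod_cast hsucc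
    have hratio_le : Real.log ((p (k+1) : ℝ) / (p k : ℝ)) ≤ ((p (k+1) : ℝ) - (p k : ℝ)) / (p k : ℝ) := by
      have h := Real.log_le_sub_one_of_pos (x := (p (k+1) : ℝ) / (p k : ℝ)) (by positivity)
      calc Real.log ((p (k+1) : ℝ) / (p k : ℝ)) ≤ (p (k+1) : ℝ) / (p k : ℝ) - 1 := h
        _ = ((p (k+1) : ℝ) - (p k : ℝ)) / (p k : ℝ) := by field_simp
    have hratio_lt : Real.log ((p (k+1) : ℝ) / (p k : ℝ)) < D * L / (p k : ℝ) := by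
      apply lt_of_le_of_lt hratio_le
      exact div_lt_div_of_pos_right hgap' hpkpos |>.trans_le (le_refl _)
    -- combine
    have hmain : (k:ℝ) * Real.log ((p (k+1) : ℝ) / (p k : ℝ)) < L := by
      have hk0 : (0:ℝ) ≤ (k:ℝ) := Nat.cast_nonneg _
      have := mul_lt_mul'' hkD hratio_lt hk0 hratio.le
      calc (k:ℝ) * Real.log ((p (k+1) : ℝ) / (p k : ℝ))
          < (p k : ℝ) / D * (D * L / (p k : ℝ)) := this
        _ = L := by field_simp
    have hkpos : (0:ℝ) < (k:ℝ) := by exact_mod_cast hk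
    have hloglt : Real.log (p (k+1) : ℝ) < (1 + 1/(k:ℝ)) * L := by
      have hsplit : Real.log ((p (k+1) : ℝ) / (p k : ℝ)) = Real.log (p (k+1) : ℝ) - L := by
        rw [hL, Real.log_div (ne_of_gt hpk1pos) (ne_of_gt hpkpos)]
      rw [hsplit] at hmain
      have : Real.log (p (k+1) : ℝ) - L < L / k := by
        rw [lt_div_iff₀ hkpos]; linarith [hmain]
      have h2 : L/k = (1/(k:ℝ)) * L := by ring
      linarith [this, h2 ▸ this]
    have hrpow : Real.log ((p k : ℝ) ^ (1 + 1/(k:ℝ))) = (1 + 1/(k:ℝ)) * L := by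
      rw [Real.log_rpow hpkpos, hL]
    have : Real.log (p (k+1) : ℝ) < Real.log ((p k : ℝ) ^ (1 + 1/(k:ℝ))) := by
      rw [hrpow]; exact hloglt
    exact (Real.log_lt_log_iff hpk1pos (by positivity)).mp this
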